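/- For m ≥ 1 and α ≥ 1, the number of self-conjugate partitions with distinct parts that are simultaneously (2α)-core and (2αm + 1)-core equals mα + 1. -/

import Mathlib

/-!
A self-conjugate partition has as many parts as its largest part; if moreover its parts are
distinct, they strictly decrease from `k` to `1` in `k` steps, so the partition is the staircase
`(k, k - 1, …, 1)`. The hook lengths of the staircase are exactly the odd numbers below `2k`.
Hence it is automatically a `2α`-core, and it is a `(2αm + 1)`-core iff `k ≤ αm`, which leaves
the `αm + 1` staircases with `0 ≤ k ≤ αm`.
-/

/-- A partition: a weakly decreasing list of positive integers. -/
def IsPartition (l : List ℕ) : Prop :=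
  l.Pairwise (· ≥ ·) ∧ ∀ x ∈ l, 0 < x

/-- Hook length at the cell in row `i`, column `j` (0-indexed). -/
def hookLength (l : List ℕ) (i j : ℕ) : ℕ :=
  (l.getD i 0 - j - 1) + ((l.filter (fun x => j < x)).length - i - 1) + 1

/-- The Young diagram of `l` contains a hook of length `h`. -/
def HasHook (l : List ℕ) (h : ℕ) : Prop :=
  ∃ i j, j < l.getD i 0 ∧ hookLength l i j = h

/-- `l` is an `s`-core: no hook of length `s`. -/
def IsCore (s : ℕ) (l : List ℕ) : Prop := ¬ HasHook l s

/-- The conjugate (transpose) partition. -/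
def conjugate (l : List ℕ) : List ℕ :=
  (List.range (l.headD 0)).map (fun j => (l.filter (fun x => j < x)).length)

def SelfConjugate (l : List ℕ) : Prop := conjugate l = l

/-- The staircase partition `(k, k-1, …, 1)`. -/
def staircase (k : ℕ) : List ℕ := (List.range k).map (fun i => k - i)

/-- The minimal bead set: the set of first-column hook lengths. -/
def beadSet (l : List ℕ) : Finset ℕ :=
  (Finset.range l.length).image (fun i => l.getD i 0 + (l.length - 1 - i))

lemma staircase_succ (k : ℕ) : staircase (k + 1) = (k + 1) :: staircase k := by
  simp only [staircase, List.range_succ_eq_map, List.map_cons, Nat.sub_zero, List.map_map]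
  congr 1
  exact List.map_congr_left fun i _ => by simp

@[simp]
lemma length_staircase (k : ℕ) : (staircase k).length = k := by simp [staircase]

lemma staircase_injective : Function.Injective staircase :=
  Function.LeftInverse.injective (g := List.length) length_staircase

lemma getD_staircase {k i : ℕ} (h : i < k) : (staircase k).getD i 0 = k - i := by
  rw [List.getD_eq_getElem _ _ (by simpa using h)]
  simp [staircase]

lemma mem_staircase {k x : ℕ} : x ∈ staircase k ↔ 0 < x ∧ x ≤ k := by
  simp only [staircase, List.mem_map, List.mem_range]
  constructor
  · rintro ⟨i, hi, rfl⟩; omega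
  · rintro ⟨h1, h2⟩; exact ⟨k - x, by omega, by omega⟩

lemma length_filter_staircase (k j : ℕ) :
    ((staircase k).filter (fun x => j < x)).length = k - j := by
  induction k with
  | zero => simp [staircase]
  | succ k ih =>
    rw [staircase_succ, List.filter_cons]
    by_cases h : j < k + 1 <;> simp [h, ih] <;> omega

lemma pairwise_gt_staircase (k : ℕ) : (staircase k).Pairwise (· > ·) := by
  induction k with
  | zero => simp [staircase]
  | succ k ih =>
    rw [staircase_succ, List.pairwise_cons]
    exact ⟨fun b hb => by rw [mem_staircase] at hb; omega, ih⟩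

lemma isPartition_staircase (k : ℕ) : IsPartition (staircase k) :=
  ⟨(pairwise_gt_staircase k).imp le_of_lt, fun _ hx => (mem_staircase.1 hx).1⟩

lemma selfConjugate_staircase (k : ℕ) : SelfConjugate (staircase k) := by
  have hhead : (staircase k).headD 0 = k := by
    cases k with
    | zero => rfl
    | succ k => rw [staircase_succ]; rfl
  unfold SelfConjugate conjugate
  rw [hhead]
  exact List.map_congr_left fun j _ => length_filter_staircase k j

lemma hookLength_staircase {k i j : ℕ} (h : i + j < k) :
    hookLength (staircase k) i j = 2 * (k - i - j - 1) + 1 := by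
  unfold hookLength
  rw [getD_staircase (by omega), length_filter_staircase]
  omega

lemma hasHook_staircase_iff {k h : ℕ} : HasHook (staircase k) h ↔ Odd h ∧ h < 2 * k := by
  constructor
  · rintro ⟨i, j, hj, rfl⟩
    have hik : i < k := by
      by_contra hik
      rw [List.getD_eq_default _ _ (by simp; omega)] at hj
      omega
    rw [getD_staircase hik] at hj
    rw [hookLength_staircase (by omega)]
    exact ⟨odd_two_mul_add_one _, by omega⟩
  · rintro ⟨⟨c, rfl⟩, hc⟩
    refine ⟨0, k - 1 - c, ?_, ?_⟩
    · rw [getD_staircase (by omega)]; omega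
    · rw [hookLength_staircase (by omega)]; omega

lemma isCore_staircase_of_even {s : ℕ} (hs : Even s) (k : ℕ) : IsCore s (staircase k) :=
  fun h => Nat.not_odd_iff_even.2 hs (hasHook_staircase_iff.1 h).1

lemma isCore_two_mul_add_one_staircase_iff {n k : ℕ} :
    IsCore (2 * n + 1) (staircase k) ↔ k ≤ n := by
  simp only [IsCore, hasHook_staircase_iff, odd_two_mul_add_one, true_and]
  omega

lemma length_le_headD_of_pairwise_gt {l : List ℕ} (hl : l.Pairwise (· > ·))
    (hpos : ∀ x ∈ l, 0 < x) : l.length ≤ l.headD 0 := by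
  induction l with
  | nil => simp
  | cons a t ih =>
    rw [List.pairwise_cons] at hl
    obtain _ | ⟨b, t'⟩ := t
    · exact hpos a List.mem_cons_self
    · have := ih hl.2 fun x hx => hpos x (List.mem_cons_of_mem a hx)
      have := hl.1 b List.mem_cons_self
      simp_all only [List.length_cons, List.headD_cons]
      omega

lemma eq_staircase_of_pairwise_gt {l : List ℕ} (hl : l.Pairwise (· > ·))
    (hpos : ∀ x ∈ l, 0 < x) (hhead : l.headD 0 = l.length) : l = staircase l.length := by
  induction l with
  | nil => rfl
  | cons a t ih =>
    rw [List.pairwise_cons] at hl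
    have htpos : ∀ x ∈ t, 0 < x := fun x hx => hpos x (List.mem_cons_of_mem a hx)
    have hle := length_le_headD_of_pairwise_gt hl.2 htpos
    have hge : t.headD 0 ≤ t.length := by
      obtain _ | ⟨b, t'⟩ := t
      · rfl
      · have := hl.1 b List.mem_cons_self
        simp_all only [List.length_cons, List.headD_cons]
        omega
    simp only [List.headD_cons, List.length_cons] at hhead ⊢
    rw [staircase_succ, ← hhead, ← ih hl.2 htpos (by omega)]

lemma isPartition_selfConjugate_nodup_iff {l : List ℕ} :
    IsPartition l ∧ SelfConjugate l ∧ l.Nodup ↔ ∃ k, staircase k = l := by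
  constructor
  · rintro ⟨⟨hge, hpos⟩, hsc, hnd⟩
    have hgt : l.Pairwise (· > ·) :=
      (hge.and hnd).imp fun h => lt_of_le_of_ne h.1 (Ne.symm h.2)
    have hhead : l.headD 0 = l.length := by
      simpa [conjugate] using congrArg List.length hsc
    exact ⟨l.length, (eq_staircase_of_pairwise_gt hgt hpos hhead).symm⟩
  · rintro ⟨k, rfl⟩
    exact ⟨isPartition_staircase k, selfConjugate_staircase k, (pairwise_gt_staircase k).nodup⟩

theorem selfConjugate_distinct_even_plus_general (m α : ℕ) :
    {l : List ℕ | IsPartition l ∧ SelfConjugate l ∧ l.Nodup ∧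
      IsCore (2 * α) l ∧ IsCore (2 * α * m + 1) l}.ncard = m * α + 1 := by
  have hset : {l : List ℕ | IsPartition l ∧ SelfConjugate l ∧ l.Nodup ∧
      IsCore (2 * α) l ∧ IsCore (2 * α * m + 1) l} = staircase '' Set.Iic (α * m) := by
    ext l
    constructor
    · rintro ⟨hp, hsc, hnd, -, hcore⟩
      obtain ⟨k, rfl⟩ := isPartition_selfConjugate_nodup_iff.1 ⟨hp, hsc, hnd⟩
      rw [mul_assoc] at hcore
      exact ⟨k, isCore_two_mul_add_one_staircase_iff.1 hcore, rfl⟩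
    · rintro ⟨k, hk, rfl⟩
      obtain ⟨hp, hsc, hnd⟩ := isPartition_selfConjugate_nodup_iff.2 ⟨k, rfl⟩
      rw [mul_assoc]
      exact ⟨hp, hsc, hnd, isCore_staircase_of_even (even_two_mul α) k,
        isCore_two_mul_add_one_staircase_iff.2 hk⟩
  rw [hset, Set.ncard_image_of_injective _ staircase_injective, Set.ncard_Iic_nat, mul_comm]

theorem selfConjugate_distinct_even_plus (m α : ℕ) (hm : 1 ≤ m) (hα : 1 ≤ α) :
    {l : List ℕ | IsPartition l ∧ SelfConjugate l ∧ l.Nodup ∧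
      IsCore (2 * α) l ∧ IsCore (2 * α * m + 1) l}.ncard = m * α + 1 :=
  selfConjugate_distinct_even_plus_general m α
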